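/- For every C∞-ring A and every subset S ⊆ A(1), a C∞-ring of fractions of A with respect to S exists: there are a C∞-ring A{S⁻¹} and a morphism η_S : A → A{S⁻¹} of C∞-rings such that every element of the image of S under (η_S)₁ is invertible in the ring A{S⁻¹}(1), and for every morphism g : A → C of C∞-rings such that every element of g₁(S) is invertible in C(1), there is a unique morphism g̃ : A{S⁻¹} → C with g̃ ∘ η_S = g. -/

import Mathlib

open CategoryTheory CategoryTheory.Limits

section Prelude

def SmoothCat : Type := ℕ

@[reducible] def SmoothCat.of (n : ℕ) : SmoothCat := n

instance SmoothCat.instFintypeFin (n : SmoothCat) : Fintype (Fin n) := Fin.fintype n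

instance : Category SmoothCat where
  Hom m n := {f : (Fin m → ℝ) → (Fin n → ℝ) // ContDiff ℝ (⊤ : ℕ∞) f}
  id _ := ⟨fun x => x, contDiff_id⟩
  comp f g := ⟨g.1 ∘ f.1, g.2.comp f.2⟩

lemma smooth_coord {m : ℕ} (i : Fin m) : ContDiff ℝ (⊤ : ℕ∞) (fun x : Fin m → ℝ => x i) := by fun_prop

def pr (m : ℕ) (i : Fin m) : SmoothCat.of m ⟶ SmoothCat.of 1 :=
  ⟨fun x _ => x i, contDiff_pi.mpr fun _ => smooth_coord i⟩

def fanSm (m : ℕ) : Fan (fun _ : Fin m => SmoothCat.of 1) := Fan.mk (SmoothCat.of m) (pr m)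

def fanSmIsLimit (m : ℕ) : IsLimit (fanSm m) :=
  mkFanLimit _
    (fun s => ⟨fun x i => (s.proj i).1 x 0,
      contDiff_pi.mpr fun i => (smooth_coord (0 : Fin 1)).comp (s.proj i).2⟩)
    (fun s i => by
      apply Subtype.ext
      funext x j
      have hj : j = 0 := Subsingleton.elim _ _
      rw [hj]
      rfl)
    (fun s g hg => by
      apply Subtype.ext
      funext x i
      exact congrArg (fun (h : s.pt ⟶ SmoothCat.of 1) => h.1 x 0) (hg i))

/-- A `C^∞`-ring object in a category `C` with finite products: a finite-product-preserving
functor from `SmoothCat`. -/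
def IsCInfRingObj {C : Type*} [Category C] (F : SmoothCat ⥤ C) : Prop :=
  PreservesFiniteProducts F

/-- The category of `C^∞`-ring objects in `C`. -/
abbrev CInfRingIn (C : Type*) [Category C] := ObjectProperty.FullSubcategory (IsCInfRingObj (C := C))

/-- The category of `C^∞`-rings (in `Set`). -/
abbrev CInfRing := CInfRingIn (Type)

/-- The underlying set `A(1)` of a `C^∞`-ring. -/
def CInfRing.el (A : CInfRing) : Type := A.obj.obj (SmoothCat.of 1)

noncomputable def mapFanIsLimit {C : Type*} [Category C] (R : CInfRingIn C) (m : ℕ) :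
    IsLimit (R.obj.mapCone (fanSm m)) := by
  have : PreservesFiniteProducts R.obj := R.property
  have : PreservesLimitsOfShape (Discrete (Fin m)) R.obj := this.preserves m
  exact isLimitOfPreserves R.obj (fanSmIsLimit m)

noncomputable def tupleEquiv (A : CInfRing) (m : ℕ) :
    A.obj.obj (SmoothCat.of m) ≃ (Fin m → A.el) :=
  (Types.isLimitEquivSections (mapFanIsLimit A m)).trans
    { toFun := fun u i => u.1 ⟨i⟩
      invFun := fun v => ⟨fun j => v j.as, by
        rintro ⟨i⟩ ⟨j⟩ f
        have h : i = j := f.down.down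
        subst h
        have : f = 𝟙 (Discrete.mk i) := Subsingleton.elim _ _
        rw [this]
        simp <;> rfl⟩
      left_inv := fun u => by
        apply Subtype.ext
        funext j
        cases j
        rfl
      right_inv := fun v => rfl }

lemma tupleEquiv_apply (A : CInfRing) (m : ℕ) (x : A.obj.obj (SmoothCat.of m)) (i : Fin m) :
    tupleEquiv A m x i = A.obj.map (pr m i) x := rfl

/-- The interpretation of a smooth function of `m` variables in a `C^∞`-ring. -/
noncomputable def opN (A : CInfRing) {m : ℕ} (f : (Fin m → ℝ) → ℝ) (hf : ContDiff ℝ (⊤ : ℕ∞) f)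
    (v : Fin m → A.el) : A.el :=
  A.obj.map (⟨fun x _ => f x, contDiff_pi.mpr fun _ => hf⟩ : SmoothCat.of m ⟶ SmoothCat.of 1)
    ((tupleEquiv A m).symm v)

lemma opN_congr (A : CInfRing) {m : ℕ} {f g : (Fin m → ℝ) → ℝ} {hf : ContDiff ℝ (⊤ : ℕ∞) f}
    {hg : ContDiff ℝ (⊤ : ℕ∞) g} (h : f = g) (v : Fin m → A.el) : opN A f hf v = opN A g hg v := by
  subst h; rfl

lemma opN_proj (A : CInfRing) {m : ℕ} (i : Fin m) (v : Fin m → A.el) :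
    opN A (fun x => x i) (smooth_coord i) v = v i := by
  have h : opN A (fun x => x i) (smooth_coord i) v
      = tupleEquiv A m ((tupleEquiv A m).symm v) i := by
    rw [tupleEquiv_apply]
    rfl
  rw [h, Equiv.apply_symm_apply]

lemma opN_comp (A : CInfRing) {k m : ℕ} (φ : (Fin m → ℝ) → ℝ) (hφ : ContDiff ℝ (⊤ : ℕ∞) φ)
    (ψ : Fin m → (Fin k → ℝ) → ℝ) (hψ : ∀ j, ContDiff ℝ (⊤ : ℕ∞) (ψ j)) (v : Fin k → A.el) :
    opN A φ hφ (fun j => opN A (ψ j) (hψ j) v) =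
      opN A (fun x => φ (fun j => ψ j x)) (hφ.comp (contDiff_pi.mpr hψ)) v := by
  classical
  set G : SmoothCat.of k ⟶ SmoothCat.of m :=
    ⟨fun x j => ψ j x, contDiff_pi.mpr hψ⟩ with hG
  have key : (tupleEquiv A m).symm (fun j => opN A (ψ j) (hψ j) v) =
      A.obj.map G ((tupleEquiv A k).symm v) := by
    apply (tupleEquiv A m).injective
    rw [Equiv.apply_symm_apply]
    funext j
    rw [tupleEquiv_apply]
    show opN A (ψ j) (hψ j) v = (A.obj.map G ≫ A.obj.map (pr m j)) ((tupleEquiv A k).symm v)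
    rw [← A.obj.map_comp]
    rfl
  show A.obj.map _ ((tupleEquiv A m).symm _) = _
  rw [key]
  show (A.obj.map G ≫ A.obj.map _) _ = _
  rw [← A.obj.map_comp]
  rfl

namespace CInfRing

variable (A : CInfRing)

/-- the interpretation of a real constant in a `C^∞`-ring -/
noncomputable def constEl (c : ℝ) : A.el :=
  opN A (fun _ : Fin 0 → ℝ => c) contDiff_const Fin.elim0

lemma opN_constEl {k : ℕ} (c : ℝ) (v : Fin k → A.el) :
    opN A (fun _ => c) contDiff_const v = constEl A c := by
  have h := opN_comp A (fun _ : Fin 0 → ℝ => c) contDiff_const Fin.elim0 (fun j => j.elim0) v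
  have h0 : (fun j : Fin 0 => opN A (Fin.elim0 j) ((fun j => j.elim0) j) v) = Fin.elim0 := by
    funext j; exact j.elim0
  rw [h0] at h
  rw [← h]
  rfl

lemma op_sub2 {k : ℕ} (f : (Fin 2 → ℝ) → ℝ) (hf : ContDiff ℝ (⊤ : ℕ∞) f)
    (p q : (Fin k → ℝ) → ℝ) (hp : ContDiff ℝ (⊤ : ℕ∞) p) (hq : ContDiff ℝ (⊤ : ℕ∞) q)
    (g : (Fin k → ℝ) → ℝ) (hg : ContDiff ℝ (⊤ : ℕ∞) g)
    (hfg : ∀ x, f ![p x, q x] = g x) (v : Fin k → A.el) :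
    opN A f hf ![opN A p hp v, opN A q hq v] = opN A g hg v := by
  have hpq : ∀ j : Fin 2, ContDiff ℝ (⊤ : ℕ∞) ((![p, q] : Fin 2 → (Fin k → ℝ) → ℝ) j) := by
    intro j
    fin_cases j
    · simpa using hp
    · simpa using hq
  have ht : (![opN A p hp v, opN A q hq v] : Fin 2 → A.el)
      = fun j => opN A ((![p, q] : Fin 2 → (Fin k → ℝ) → ℝ) j) (hpq j) v := by
    funext j
    fin_cases j <;> rfl
  rw [ht, opN_comp]
  refine opN_congr A ?_ v
  funext x
  rw [← hfg x]
  congr 1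
  funext j
  fin_cases j <;> rfl

noncomputable instance : Add A.el :=
  ⟨fun a b => opN A (fun x : Fin 2 → ℝ => x 0 + x 1) (by fun_prop) ![a, b]⟩

noncomputable instance : Mul A.el :=
  ⟨fun a b => opN A (fun x : Fin 2 → ℝ => x 0 * x 1) (by fun_prop) ![a, b]⟩

noncomputable instance : Neg A.el :=
  ⟨fun a => opN A (fun x : Fin 1 → ℝ => -x 0) (by fun_prop) ![a]⟩

noncomputable instance : Zero A.el := ⟨constEl A 0⟩

noncomputable instance : One A.el := ⟨constEl A 1⟩

lemma add_def (a b : A.el) :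
    a + b = opN A (fun x : Fin 2 → ℝ => x 0 + x 1) (by fun_prop) ![a, b] := rfl

lemma mul_def (a b : A.el) :
    a * b = opN A (fun x : Fin 2 → ℝ => x 0 * x 1) (by fun_prop) ![a, b] := rfl

lemma neg_def (a : A.el) :
    -a = opN A (fun x : Fin 1 → ℝ => -x 0) (by fun_prop) ![a] := rfl

lemma zero_def : (0 : A.el) = constEl A 0 := rfl

lemma one_def : (1 : A.el) = constEl A 1 := rfl

section ops

/-- a binary operation expressed in a `k`-variable context -/
lemma binop_ctx {k : ℕ} (f : (Fin 2 → ℝ) → ℝ) (hf : ContDiff ℝ (⊤ : ℕ∞) f)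
    (p q : (Fin k → ℝ) → ℝ) (hp : ContDiff ℝ (⊤ : ℕ∞) p) (hq : ContDiff ℝ (⊤ : ℕ∞) q)
    (a b : A.el) (v : Fin k → A.el)
    (ha : a = opN A p hp v) (hb : b = opN A q hq v)
    (g : (Fin k → ℝ) → ℝ) (hg : ContDiff ℝ (⊤ : ℕ∞) g) (hfg : ∀ x, f ![p x, q x] = g x) :
    opN A f hf ![a, b] = opN A g hg v := by
  subst ha hb
  exact op_sub2 A f hf p q hp hq g hg hfg v

end ops

end CInfRing

end Prelude

namespace CInfRing

variable (A : CInfRing)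

lemma addEl_comm (a b : A.el) : a + b = b + a := by
  rw [add_def, add_def]
  rw [binop_ctx A _ (by fun_prop) (fun x : Fin 2 → ℝ => x 1) (fun x => x 0)
    (smooth_coord 1) (smooth_coord 0) b a ![a, b]
    (opN_proj A 1 ![a, b]).symm (opN_proj A 0 ![a, b]).symm
    (fun x => x 1 + x 0) (by fun_prop) (fun x => by simp)]
  exact opN_congr A (by funext x; ring) _

lemma addEl_assoc (a b c : A.el) : a + b + c = a + (b + c) := by
  have hab : a + b = opN A (fun x : Fin 3 → ℝ => x 0 + x 1) (by fun_prop) ![a, b, c] := by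
    rw [add_def]
    exact binop_ctx A _ (by fun_prop) _ _ (smooth_coord 0) (smooth_coord 1) a b ![a, b, c]
      (opN_proj A 0 ![a, b, c]).symm (opN_proj A 1 ![a, b, c]).symm _ (by fun_prop)
      (fun x => by simp)
  have hbc : b + c = opN A (fun x : Fin 3 → ℝ => x 1 + x 2) (by fun_prop) ![a, b, c] := by
    rw [add_def]
    exact binop_ctx A _ (by fun_prop) _ _ (smooth_coord 1) (smooth_coord 2) b c ![a, b, c]
      (opN_proj A 1 ![a, b, c]).symm (opN_proj A 2 ![a, b, c]).symm _ (by fun_prop)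
      (fun x => by simp)
  rw [add_def A (a + b) c, add_def A a (b + c)]
  rw [binop_ctx A _ (by fun_prop) _ _ (by fun_prop) (smooth_coord 2) (a + b) c ![a, b, c]
    hab (opN_proj A 2 ![a, b, c]).symm (fun x => (x 0 + x 1) + x 2) (by fun_prop)
    (fun x => by simp)]
  rw [binop_ctx A _ (by fun_prop) _ _ (smooth_coord 0) (by fun_prop) a (b + c) ![a, b, c]
    (opN_proj A 0 ![a, b, c]).symm hbc (fun x => x 0 + (x 1 + x 2)) (by fun_prop)
    (fun x => by simp)]
  exact opN_congr A (by funext x; ring) _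

lemma zeroEl_add (a : A.el) : 0 + a = a := by
  have h0 : (0 : A.el) = opN A (fun _ : Fin 1 → ℝ => (0 : ℝ)) contDiff_const ![a] := by
    rw [zero_def, opN_constEl]
  rw [add_def]
  rw [binop_ctx A _ (by fun_prop) _ _ contDiff_const (smooth_coord 0) 0 a ![a]
    h0 (opN_proj A 0 ![a]).symm (fun x => 0 + x 0) (by fun_prop) (fun x => by simp)]
  rw [opN_congr A (g := fun x : Fin 1 → ℝ => x 0) (hg := smooth_coord 0)
    (by funext x; ring) ![a]]
  exact opN_proj A 0 ![a]

lemma mulEl_comm (a b : A.el) : a * b = b * a := by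
  rw [mul_def, mul_def]
  rw [binop_ctx A _ (by fun_prop) (fun x : Fin 2 → ℝ => x 1) (fun x => x 0)
    (smooth_coord 1) (smooth_coord 0) b a ![a, b]
    (opN_proj A 1 ![a, b]).symm (opN_proj A 0 ![a, b]).symm
    (fun x => x 1 * x 0) (by fun_prop) (fun x => by simp)]
  exact opN_congr A (by funext x; ring) _

lemma mulEl_assoc (a b c : A.el) : a * b * c = a * (b * c) := by
  have hab : a * b = opN A (fun x : Fin 3 → ℝ => x 0 * x 1) (by fun_prop) ![a, b, c] := by
    rw [mul_def]
    exact binop_ctx A _ (by fun_prop) _ _ (smooth_coord 0) (smooth_coord 1) a b ![a, b, c]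
      (opN_proj A 0 ![a, b, c]).symm (opN_proj A 1 ![a, b, c]).symm _ (by fun_prop)
      (fun x => by simp)
  have hbc : b * c = opN A (fun x : Fin 3 → ℝ => x 1 * x 2) (by fun_prop) ![a, b, c] := by
    rw [mul_def]
    exact binop_ctx A _ (by fun_prop) _ _ (smooth_coord 1) (smooth_coord 2) b c ![a, b, c]
      (opN_proj A 1 ![a, b, c]).symm (opN_proj A 2 ![a, b, c]).symm _ (by fun_prop)
      (fun x => by simp)
  rw [mul_def A (a * b) c, mul_def A a (b * c)]
  rw [binop_ctx A _ (by fun_prop) _ _ (by fun_prop) (smooth_coord 2) (a * b) c ![a, b, c]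
    hab (opN_proj A 2 ![a, b, c]).symm (fun x => (x 0 * x 1) * x 2) (by fun_prop)
    (fun x => by simp)]
  rw [binop_ctx A _ (by fun_prop) _ _ (smooth_coord 0) (by fun_prop) a (b * c) ![a, b, c]
    (opN_proj A 0 ![a, b, c]).symm hbc (fun x => x 0 * (x 1 * x 2)) (by fun_prop)
    (fun x => by simp)]
  exact opN_congr A (by funext x; ring) _

lemma oneEl_mul (a : A.el) : 1 * a = a := by
  have h1 : (1 : A.el) = opN A (fun _ : Fin 1 → ℝ => (1 : ℝ)) contDiff_const ![a] := by
    rw [one_def, opN_constEl]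
  rw [mul_def]
  rw [binop_ctx A _ (by fun_prop) _ _ contDiff_const (smooth_coord 0) 1 a ![a]
    h1 (opN_proj A 0 ![a]).symm (fun x => 1 * x 0) (by fun_prop) (fun x => by simp)]
  rw [opN_congr A (g := fun x : Fin 1 → ℝ => x 0) (hg := smooth_coord 0)
    (by funext x; ring) ![a]]
  exact opN_proj A 0 ![a]

lemma zeroEl_mul (a : A.el) : 0 * a = 0 := by
  have h0 : (0 : A.el) = opN A (fun _ : Fin 1 → ℝ => (0 : ℝ)) contDiff_const ![a] := by
    rw [zero_def, opN_constEl]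
  rw [mul_def]
  rw [binop_ctx A _ (by fun_prop) _ _ contDiff_const (smooth_coord 0) 0 a ![a]
    h0 (opN_proj A 0 ![a]).symm (fun x => 0 * x 0) (by fun_prop) (fun x => by simp)]
  rw [opN_congr A (g := fun _ : Fin 1 → ℝ => (0:ℝ)) (hg := contDiff_const)
    (by funext x; ring) ![a]]
  rw [opN_constEl, zero_def]

lemma negEl_add_cancel (a : A.el) : -a + a = 0 := by
  rw [add_def]
  rw [binop_ctx A _ (by fun_prop) (fun x : Fin 1 → ℝ => -x 0) (fun x => x 0)
    (by fun_prop) (smooth_coord 0) (-a) a ![a]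
    (neg_def A a) (opN_proj A 0 ![a]).symm (fun x => -x 0 + x 0) (by fun_prop)
    (fun x => by simp)]
  rw [opN_congr A (g := fun _ : Fin 1 → ℝ => (0:ℝ)) (hg := contDiff_const)
    (by funext x; ring) ![a]]
  rw [opN_constEl, zero_def]

lemma leftEl_distrib (a b c : A.el) : a * (b + c) = a * b + a * c := by
  have hbc : b + c = opN A (fun x : Fin 3 → ℝ => x 1 + x 2) (by fun_prop) ![a, b, c] := by
    rw [add_def]
    exact binop_ctx A _ (by fun_prop) _ _ (smooth_coord 1) (smooth_coord 2) b c ![a, b, c]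
      (opN_proj A 1 ![a, b, c]).symm (opN_proj A 2 ![a, b, c]).symm _ (by fun_prop)
      (fun x => by simp)
  have hab : a * b = opN A (fun x : Fin 3 → ℝ => x 0 * x 1) (by fun_prop) ![a, b, c] := by
    rw [mul_def]
    exact binop_ctx A _ (by fun_prop) _ _ (smooth_coord 0) (smooth_coord 1) a b ![a, b, c]
      (opN_proj A 0 ![a, b, c]).symm (opN_proj A 1 ![a, b, c]).symm _ (by fun_prop)
      (fun x => by simp)
  have hac : a * c = opN A (fun x : Fin 3 → ℝ => x 0 * x 2) (by fun_prop) ![a, b, c] := by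
    rw [mul_def]
    exact binop_ctx A _ (by fun_prop) _ _ (smooth_coord 0) (smooth_coord 2) a c ![a, b, c]
      (opN_proj A 0 ![a, b, c]).symm (opN_proj A 2 ![a, b, c]).symm _ (by fun_prop)
      (fun x => by simp)
  rw [mul_def A a (b + c), add_def A (a * b) (a * c)]
  rw [binop_ctx A _ (by fun_prop) _ _ (smooth_coord 0) (by fun_prop) a (b + c) ![a, b, c]
    (opN_proj A 0 ![a, b, c]).symm hbc (fun x => x 0 * (x 1 + x 2)) (by fun_prop)
    (fun x => by simp)]
  rw [binop_ctx A _ (by fun_prop) _ _ (by fun_prop) (by fun_prop) (a * b) (a * c) ![a, b, c]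
    hab hac (fun x => x 0 * x 1 + x 0 * x 2) (by fun_prop) (fun x => by simp)]
  exact opN_congr A (by funext x; ring) _

noncomputable instance : CommRing A.el where
  add := (· + ·)
  add_assoc := addEl_assoc A
  zero := 0
  zero_add := zeroEl_add A
  add_zero a := by rw [addEl_comm]; exact zeroEl_add A a
  nsmul := nsmulRec
  add_comm := addEl_comm A
  mul := (· * ·)
  left_distrib := leftEl_distrib A
  right_distrib a b c := by
    rw [mulEl_comm, leftEl_distrib, mulEl_comm A c a, mulEl_comm A c b]
  zero_mul := zeroEl_mul A
  mul_zero a := by rw [mulEl_comm]; exact zeroEl_mul A a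
  mul_assoc := mulEl_assoc A
  one := 1
  one_mul := oneEl_mul A
  mul_one a := by rw [mulEl_comm]; exact oneEl_mul A a
  neg := (-·)
  zsmul := zsmulRec
  neg_add_cancel := negEl_add_cancel A
  mul_comm := mulEl_comm A

end CInfRing

/-- The component at `1` of a morphism of `C^∞`-rings. -/
def app1 {A B : CInfRing} (h : A ⟶ B) : A.el → B.el := fun x => h.hom.app (SmoothCat.of 1) x

/-- `h` inverts `S` if every element of the image of `S` becomes invertible. -/
def Inverts {A B : CInfRing} (h : A ⟶ B) (S : Set A.el) : Prop :=
  ∀ s ∈ S, IsUnit (app1 h s)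

/-- `h : A ⟶ B` is a `C^∞`-ring of fractions of `A` with respect to `S`:
it inverts `S` and is initial among morphisms out of `A` inverting `S`. -/
def IsFracRing {A B : CInfRing} (h : A ⟶ B) (S : Set A.el) : Prop :=
  Inverts h S ∧
    ∀ (C : CInfRing) (g : A ⟶ C), Inverts g S → ∃! g' : B ⟶ C, h ≫ g' = g

/-- A `C^∞`-ring is finitely presented if it is a compact object,
i.e. its co-Yoneda functor preserves filtered colimits. -/
def IsFinitelyPresented (A : CInfRing) : Prop :=
  PreservesFilteredColimits (coyoneda.obj (Opposite.op A))

/-- The category of finitely presented `C^∞`-rings. -/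
abbrev CInfRingFP := ObjectProperty.FullSubcategory IsFinitelyPresented

/-- The free `C^∞`-ring on `n` generators, `C^∞(ℝ^n) = Hom(n, -)`. -/
def freeCInf (n : ℕ) : CInfRing :=
  ⟨coyoneda.obj (Opposite.op (SmoothCat.of n)), ⟨fun _ => inferInstance⟩⟩

/-- A family of elements generates the unit ideal. -/
def GeneratesUnitIdeal {A : CInfRing} {n : ℕ} (a : Fin n → A.el) : Prop :=
  Ideal.span (Set.range a) = ⊤

section Y

variable (hfp : ∀ n : ℕ, IsFinitelyPresented (freeCInf n))

/-- The free `C^∞`-ring on `n` generators as a finitely presented `C^∞`-ring. -/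
def freeFP (n : ℕ) : CInfRingFP := ⟨freeCInf n, hfp n⟩

/-- The canonical functor `𝓒∞ ⥤ (C∞Ring_fp)ᵒᵖ`. -/
def ySm : SmoothCat ⥤ (CInfRingFP)ᵒᵖ where
  obj n := Opposite.op (freeFP hfp n)
  map {m n} f := (show freeFP hfp n ⟶ freeFP hfp m from ⟨⟨coyoneda.map f.op⟩⟩).op

/-- Finite-limit preserving functors. -/
def IsLexFunctor {C : Type*} [Category C] {D : Type*} [Category D] (F : C ⥤ D) : Prop :=
  PreservesFiniteLimits F

/-- The category of finite-limit preserving functors `(C∞Ring_fp)ᵒᵖ ⥤ D`. -/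
abbrev LexFunCat (D : Type*) [Category D] :=
  ObjectProperty.FullSubcategory (fun F : (CInfRingFP)ᵒᵖ ⥤ D => IsLexFunctor F)

end Y

section FracConstruction

lemma tyHomExt {X Y : Type} {f g : X ⟶ Y} (h : ∀ x, f x = g x) : f = g := by
  ext x
  exact h x

lemma mulSmooth : ContDiff ℝ (⊤ : ℕ∞) (fun x : Fin 2 → ℝ => x 0 * x 1) := by fun_prop

variable (A : CInfRing) (S : Set A.el)

/-- Terms of the localization: generators are elements of `A` and formal inverses of `S`. -/
inductive FTerm : Type
  | var : A.el ⊕ S → FTerm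
  | op (m : ℕ) (f : (Fin m → ℝ) → ℝ) (hf : ContDiff ℝ (⊤ : ℕ∞) f) (v : Fin m → FTerm) : FTerm

/-- The congruence generated by the `C^∞`-ring axioms, the relations of `A`, and
invertibility of (the images of) elements of `S`. -/
inductive FRel : FTerm A S → FTerm A S → Prop
  | refl (t) : FRel t t
  | symm {t u} : FRel t u → FRel u t
  | trans {t u w} : FRel t u → FRel u w → FRel t w
  | compat {m : ℕ} {f : (Fin m → ℝ) → ℝ} {hf : ContDiff ℝ (⊤ : ℕ∞) f} {v w : Fin m → FTerm A S}
      (h : ∀ i, FRel (v i) (w i)) : FRel (.op m f hf v) (.op m f hf w)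
  | proj {m : ℕ} (i : Fin m) (v : Fin m → FTerm A S) :
      FRel (.op m (fun x => x i) (smooth_coord i) v) (v i)
  | comp {k m : ℕ} (φ : (Fin m → ℝ) → ℝ) (hφ : ContDiff ℝ (⊤ : ℕ∞) φ)
      (ψ : Fin m → (Fin k → ℝ) → ℝ) (hψ : ∀ j, ContDiff ℝ (⊤ : ℕ∞) (ψ j)) (v : Fin k → FTerm A S) :
      FRel (.op m φ hφ (fun j => .op k (ψ j) (hψ j) v))
        (.op k (fun x => φ (fun j => ψ j x)) (hφ.comp (contDiff_pi.mpr hψ)) v)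
  | fromA {m : ℕ} {f : (Fin m → ℝ) → ℝ} {hf : ContDiff ℝ (⊤ : ℕ∞) f} (a : Fin m → A.el) :
      FRel (.op m f hf (fun i => .var (.inl (a i)))) (.var (.inl (opN A f hf a)))
  | inv (s : S) :
      FRel (.op 2 (fun x => x 0 * x 1) mulSmooth ![.var (.inl s.1), .var (.inr s)])
        (.op 0 (fun _ => 1) contDiff_const Fin.elim0)

instance fracSetoid : Setoid (FTerm A S) :=
  ⟨FRel A S, ⟨FRel.refl, FRel.symm, FRel.trans⟩⟩

/-- The underlying set of the localization. -/
def FEl : Type := Quotient (fracSetoid A S)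

variable {A S}

/-- The operations on the localization. -/
noncomputable def fop {m : ℕ} (f : (Fin m → ℝ) → ℝ) (hf : ContDiff ℝ (⊤ : ℕ∞) f)
    (v : Fin m → FEl A S) : FEl A S :=
  ⟦FTerm.op m f hf (fun i => (v i).out)⟧

lemma fop_mk {m : ℕ} (f : (Fin m → ℝ) → ℝ) (hf : ContDiff ℝ (⊤ : ℕ∞) f) (t : Fin m → FTerm A S) :
    fop f hf (fun i => ⟦t i⟧) = ⟦FTerm.op m f hf t⟧ :=
  Quotient.sound (FRel.compat fun i => Quotient.exact (Quotient.out_eq ⟦t i⟧))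

lemma fop_proj {m : ℕ} (i : Fin m) (hf : ContDiff ℝ (⊤ : ℕ∞) (fun x : Fin m → ℝ => x i))
    (v : Fin m → FEl A S) : fop (fun x => x i) hf v = v i := by
  have h : v = fun j => ⟦(v j).out⟧ := by funext j; exact (Quotient.out_eq _).symm
  rw [h, fop_mk]
  exact Quotient.sound (FRel.proj i _)

lemma fop_comp {k m : ℕ} (φ : (Fin m → ℝ) → ℝ) (hφ : ContDiff ℝ (⊤ : ℕ∞) φ)
    (ψ : Fin m → (Fin k → ℝ) → ℝ) (hψ : ∀ j, ContDiff ℝ (⊤ : ℕ∞) (ψ j))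
    (hc : ContDiff ℝ (⊤ : ℕ∞) (fun x => φ (fun j => ψ j x))) (v : Fin k → FEl A S) :
    fop φ hφ (fun j => fop (ψ j) (hψ j) v) = fop (fun x => φ (fun j => ψ j x)) hc v := by
  have h : v = fun j => ⟦(v j).out⟧ := by funext j; exact (Quotient.out_eq _).symm
  rw [h]
  have h2 : (fun j => fop (ψ j) (hψ j) (fun i => ⟦(v i).out⟧))
      = fun j => ⟦FTerm.op k (ψ j) (hψ j) (fun i => (v i).out)⟧ := by
    funext j; exact fop_mk _ _ _
  rw [h2, fop_mk, fop_mk]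
  exact Quotient.sound (FRel.comp φ hφ ψ hψ _)

variable (A S)

/-- The localization as a functor `SmoothCat ⥤ Type`. -/
noncomputable def Ffun : SmoothCat ⥤ Type where
  obj n := Fin n → FEl A S
  map {m n} F := ↾fun v i => fop (fun y => F.1 y i) ((smooth_coord i).comp F.2) v
  map_id n := by
    refine tyHomExt fun v => ?_
    funext i
    exact fop_proj i _ v
  map_comp {k m n} F G := by
    refine tyHomExt fun v => ?_
    funext i
    show fop (fun y => (F ≫ G).1 y i) _ v
        = fop (fun z => G.1 z i) _ (fun j => fop (fun y => F.1 y j) ((smooth_coord j).comp F.2) v)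
    rw [fop_comp (fun z => G.1 z i) ((smooth_coord i).comp G.2) (fun j => fun y => F.1 y j)
      (fun j => (smooth_coord j).comp F.2)
      ((smooth_coord i).comp (G.2.comp (contDiff_pi.mpr fun j => (smooth_coord j).comp F.2))) v]
    rfl

section Fan

variable {J : Type} [Fintype J] (f : J → ℕ)

noncomputable def sigEquiv : (Σ j : J, Fin (f j)) ≃ Fin (∑ j, f j) :=
  Fintype.equivFinOfCardEq (by simp)

/-- The canonical product cone in `SmoothCat` over an arbitrary finite family. -/
noncomputable def fanJ : Fan (fun j : J => SmoothCat.of (f j)) :=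
  Fan.mk (SmoothCat.of (∑ j, f j))
    (fun j => ⟨fun x i => x (sigEquiv f ⟨j, i⟩),
      contDiff_pi.mpr fun i => smooth_coord _⟩)

noncomputable def fanJIsLimit : IsLimit (fanJ f) :=
  mkFanLimit _
    (fun s => ⟨fun x k => (s.proj ((sigEquiv f).symm k).1).1 x ((sigEquiv f).symm k).2,
      contDiff_pi.mpr fun k => (smooth_coord _).comp (s.proj _).2⟩)
    (fun s j => by
      apply Subtype.ext
      funext x i
      show (s.proj ((sigEquiv f).symm (sigEquiv f ⟨j, i⟩)).1).1 x
          ((sigEquiv f).symm (sigEquiv f ⟨j, i⟩)).2 = (s.proj j).1 x i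
      rw [Equiv.symm_apply_apply])
    (fun s g hg => by
      apply Subtype.ext
      funext x k
      show g.1 x k = (s.proj ((sigEquiv f).symm k).1).1 x ((sigEquiv f).symm k).2
      have hk : k = sigEquiv f ((sigEquiv f).symm k) := (Equiv.apply_symm_apply _ _).symm
      rw [hk, Equiv.symm_apply_apply]
      obtain ⟨j, i⟩ := (sigEquiv f).symm k
      have := congrArg (fun (h : s.pt ⟶ SmoothCat.of (f j)) => h.1 x i) (hg j)
      exact this)

/-- `Ffun` maps the canonical product cone to a limit cone. -/
noncomputable def FfunFanIsLimit : IsLimit ((Ffun A S).mapCone (fanJ f)) :=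
  IsLimit.mk
    (fun s => ↾fun x k => (s.π.app ⟨((sigEquiv f).symm k).1⟩ x) ((sigEquiv f).symm k).2)
    (fun s j => by
      obtain ⟨j⟩ := j
      refine tyHomExt fun x => ?_
      funext i
      show fop (fun y => y (sigEquiv f ⟨j, i⟩)) _
          (fun k => (s.π.app ⟨((sigEquiv f).symm k).1⟩ x) ((sigEquiv f).symm k).2)
          = s.π.app ⟨j⟩ x i
      refine (fop_proj _ _ _).trans ?_
      show (s.π.app ⟨((sigEquiv f).symm (sigEquiv f ⟨j, i⟩)).1⟩ x)
          ((sigEquiv f).symm (sigEquiv f ⟨j, i⟩)).2 = s.π.app ⟨j⟩ x i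
      rw [Equiv.symm_apply_apply])
    (fun s m hm => by
      refine tyHomExt fun x => ?_
      funext k
      show m x k = (s.π.app ⟨((sigEquiv f).symm k).1⟩ x) ((sigEquiv f).symm k).2
      have hk : k = sigEquiv f ((sigEquiv f).symm k) := (Equiv.apply_symm_apply _ _).symm
      rw [hk, Equiv.symm_apply_apply]
      obtain ⟨j, i⟩ := (sigEquiv f).symm k
      have h1 := congrArg (fun (q : s.pt ⟶ Fin (f j) → FEl A S) => q x i) (hm ⟨j⟩)
      have h2 : ((Ffun A S).mapCone (fanJ f)).π.app ⟨j⟩ (m x) i = m x (sigEquiv f ⟨j, i⟩) := by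
        show fop (fun y => y (sigEquiv f ⟨j, i⟩)) _ (m x) = m x (sigEquiv f ⟨j, i⟩)
        exact fop_proj _ _ _
      show m x (sigEquiv f ⟨j, i⟩) = s.π.app ⟨j⟩ x i
      rw [← h2]
      exact h1)

end Fan

lemma FfunPreserves : IsCInfRingObj (Ffun A S) := by
  constructor
  intro J
  constructor
  intro K
  haveI h1 : PreservesLimit (Discrete.functor (K.obj ∘ Discrete.mk)) (Ffun A S) :=
    preservesLimit_of_preserves_limit_cone (fanJIsLimit (fun j => K.obj ⟨j⟩))
      (FfunFanIsLimit A S (fun j => K.obj ⟨j⟩))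
  exact preservesLimit_of_iso_diagram (Ffun A S) Discrete.natIsoFunctor.symm

/-- The localization as a `C^∞`-ring. -/
noncomputable def FB : CInfRing := ⟨Ffun A S, FfunPreserves A S⟩

variable {A S}

lemma tupleEquiv_FB {m : ℕ} (x : Fin m → FEl A S) (i : Fin m) :
    tupleEquiv (FB A S) m x i = fun _ : Fin 1 => x i := by
  show (FB A S).obj.map (pr m i) x = _
  funext k
  exact fop_proj i _ x

lemma tupleEquiv_FB_symm {m : ℕ} (v : Fin m → (FB A S).el) :
    (tupleEquiv (FB A S) m).symm v = fun i => v i 0 := by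
  apply (tupleEquiv (FB A S) m).injective
  rw [Equiv.apply_symm_apply]
  funext i
  rw [tupleEquiv_FB]
  funext k
  exact congrArg (v i) (Subsingleton.elim k 0)

lemma opN_FB {m : ℕ} (f : (Fin m → ℝ) → ℝ) (hf : ContDiff ℝ (⊤ : ℕ∞) f) (v : Fin m → (FB A S).el) :
    opN (FB A S) f hf v = fun _ : Fin 1 => fop f hf (fun i => v i 0) := by
  show (FB A S).obj.map _ ((tupleEquiv (FB A S) m).symm v) = _
  rw [tupleEquiv_FB_symm]
  rfl

lemma pr_one (i : Fin 1) : pr 1 i = 𝟙 (SmoothCat.of 1) :=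
  Subtype.ext (funext fun x => funext fun j => congrArg x (Subsingleton.elim i j))

lemma tupleEquiv_one (D : CInfRing) (s : D.el) (i : Fin 1) : tupleEquiv D 1 s i = s := by
  show D.obj.map (pr 1 i) s = s
  rw [pr_one, D.obj.map_id]
  rfl

lemma tupleEquiv_map (D : CInfRing) {m n : ℕ} (F : SmoothCat.of m ⟶ SmoothCat.of n)
    (x : D.obj.obj (SmoothCat.of m)) (i : Fin n) (hFi : ContDiff ℝ (⊤ : ℕ∞) (fun y => F.1 y i)) :
    tupleEquiv D n (D.obj.map F x) i = opN D (fun y => F.1 y i) hFi (tupleEquiv D m x) := by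
  rw [tupleEquiv_apply]
  show (D.obj.map F ≫ D.obj.map (pr n i)) x = _
  rw [← D.obj.map_comp]
  show D.obj.map _ x
      = D.obj.map _ ((tupleEquiv D m).symm (tupleEquiv D m x))
  rw [Equiv.symm_apply_apply]
  congr 1

lemma hom_tupleSymm {D C : CInfRing} (h : D ⟶ C) {m : ℕ} (v : Fin m → D.el) :
    h.hom.app (SmoothCat.of m) ((tupleEquiv D m).symm v)
      = (tupleEquiv C m).symm (fun i => app1 h (v i)) := by
  apply (tupleEquiv C m).injective
  rw [Equiv.apply_symm_apply]
  funext i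
  rw [tupleEquiv_apply]
  rw [← NatTrans.naturality_apply h.hom (pr m i)]
  show app1 h (tupleEquiv D m ((tupleEquiv D m).symm v) i) = app1 h (v i)
  rw [Equiv.apply_symm_apply]

lemma hom_opN {D C : CInfRing} (h : D ⟶ C) {m : ℕ} (f : (Fin m → ℝ) → ℝ)
    (hf : ContDiff ℝ (⊤ : ℕ∞) f) (v : Fin m → D.el) :
    app1 h (opN D f hf v) = opN C f hf (fun i => app1 h (v i)) := by
  show h.hom.app (SmoothCat.of 1) (D.obj.map _ ((tupleEquiv D m).symm v)) = _
  rw [NatTrans.naturality_apply h.hom _ ((tupleEquiv D m).symm v), hom_tupleSymm]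
  rfl

lemma app1_mul {D C : CInfRing} (h : D ⟶ C) (a b : D.el) :
    app1 h (a * b) = app1 h a * app1 h b := by
  rw [CInfRing.mul_def, CInfRing.mul_def, hom_opN]
  congr 1
  funext i
  fin_cases i <;> rfl

lemma app1_one {D C : CInfRing} (h : D ⟶ C) : app1 h (1 : D.el) = (1 : C.el) := by
  rw [CInfRing.one_def, CInfRing.one_def]
  show app1 h (opN D _ contDiff_const Fin.elim0) = CInfRing.constEl C 1
  rw [hom_opN]
  exact CInfRing.opN_constEl C 1 _

/-- The generator map into the localization. -/
def Fvar (a : A.el) : FEl A S := ⟦FTerm.var (.inl a)⟧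

lemma Fvar_opN {m : ℕ} (f : (Fin m → ℝ) → ℝ) (hf : ContDiff ℝ (⊤ : ℕ∞) f) (a : Fin m → A.el) :
    (Fvar (opN A f hf a) : FEl A S) = fop f hf (fun i => Fvar (a i)) := by
  rw [show (fun i => (Fvar (a i) : FEl A S)) = fun i => ⟦FTerm.var (.inl (a i))⟧ from rfl,
    fop_mk]
  exact (Quotient.sound (FRel.fromA a)).symm

variable (A S)

/-- The unit of the localization, as a natural transformation. -/
noncomputable def FetaNat : A.obj ⟶ (FB A S).obj where
  app n := ↾fun x i => Fvar (tupleEquiv A n x i)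
  naturality {m n} F := by
    refine tyHomExt fun x => ?_
    funext i
    show Fvar (tupleEquiv A n (A.obj.map F x) i)
        = fop (fun y => F.1 y i) ((smooth_coord i).comp F.2) (fun j => Fvar (tupleEquiv A m x j))
    exact (congrArg Fvar (tupleEquiv_map A (m := m) (n := n) F x i ((smooth_coord i).comp F.2))).trans
      (Fvar_opN _ _ _)

/-- The unit of the localization. -/
noncomputable def Feta : A ⟶ FB A S := ⟨FetaNat A S⟩

variable {A S}

lemma app1_Feta (a : A.el) : app1 (Feta A S) a = fun _ : Fin 1 => Fvar a := by
  funext i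
  show Fvar (tupleEquiv A 1 a i) = Fvar a
  rw [tupleEquiv_one]

lemma Feta_mul_inv (s : A.el) (hs : s ∈ S) :
    app1 (Feta A S) s * (show (FB A S).el from fun _ : Fin 1 => ⟦FTerm.var (.inr ⟨s, hs⟩)⟧)
      = (1 : (FB A S).el) := by
  have hone : (1 : (FB A S).el)
      = opN (FB A S) (fun _ : Fin 0 → ℝ => (1 : ℝ)) contDiff_const Fin.elim0 := rfl
  refine (CInfRing.mul_def (FB A S) _ _).trans ?_
  rw [hone, opN_FB, opN_FB]
  funext k
  have h1 : (fun i => (![app1 (Feta A S) s,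
        (show (FB A S).el from fun _ : Fin 1 => ⟦FTerm.var (.inr ⟨s, hs⟩)⟧)]
          : Fin 2 → (FB A S).el) i 0)
      = fun i => ⟦(![FTerm.var (.inl s), FTerm.var (.inr ⟨s, hs⟩)] : Fin 2 → FTerm A S) i⟧ := by
    funext i
    fin_cases i
    · show app1 (Feta A S) s 0 = ⟦FTerm.var (.inl s)⟧
      rw [app1_Feta]
      rfl
    · rfl
  rw [h1, fop_mk]
  have h2 : (fun i => ((Fin.elim0 : Fin 0 → (FB A S).el) i 0))
      = fun i : Fin 0 => (⟦(Fin.elim0 : Fin 0 → FTerm A S) i⟧ : FEl A S) := by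
    funext i
    exact i.elim0
  rw [h2, fop_mk]
  exact Quotient.sound (FRel.inv ⟨s, hs⟩)

lemma Feta_inverts : Inverts (Feta A S) S := by
  intro s hs
  exact ⟨⟨app1 (Feta A S) s, show (FB A S).el from fun _ => ⟦FTerm.var (.inr ⟨s, hs⟩)⟧, Feta_mul_inv s hs,
    by rw [mul_comm]; exact Feta_mul_inv s hs⟩, rfl⟩

section UnivProp

variable {C : CInfRing} (g : A ⟶ C)

/-- Evaluation of terms in a `C^∞`-ring `C` along `g`. -/
noncomputable def Fev : FTerm A S → C.el
  | .var (.inl a) => app1 g a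
  | .var (.inr s) => Ring.inverse (app1 g s.1)
  | .op m f hf v => opN C f hf (fun i => Fev (v i))

lemma Fev_sound (hg : Inverts g S) {t u : FTerm A S} (h : FRel A S t u) : Fev g t = Fev g u := by
  induction h with
  | refl t => rfl
  | symm _ ih => exact ih.symm
  | trans _ _ ih1 ih2 => exact ih1.trans ih2
  | @compat m f hf v w _ ih =>
    show opN C f hf (fun i => Fev g (v i)) = opN C f hf (fun i => Fev g (w i))
    exact congrArg _ (funext ih)
  | proj i v => exact opN_proj C i _
  | comp φ hφ ψ hψ v => exact opN_comp C φ hφ ψ hψ _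
  | fromA a => exact (hom_opN g _ _ a).symm
  | inv s =>
    show opN C (fun x => x 0 * x 1) mulSmooth
        (fun i => Fev g ((![FTerm.var (.inl s.1), FTerm.var (.inr s)] : Fin 2 → FTerm A S) i))
      = opN C (fun _ => 1) contDiff_const (fun i : Fin 0 => Fev g ((Fin.elim0 : Fin 0 → FTerm A S) i))
    have h1 : (fun i => Fev g ((![FTerm.var (.inl s.1), FTerm.var (.inr s)] : Fin 2 → FTerm A S) i))
        = ![app1 g s.1, Ring.inverse (app1 g s.1)] := by
      funext i
      fin_cases i <;> rfl
    rw [h1]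
    have h2 : opN C (fun x : Fin 2 → ℝ => x 0 * x 1) mulSmooth
        ![app1 g s.1, Ring.inverse (app1 g s.1)] = app1 g s.1 * Ring.inverse (app1 g s.1) :=
      (CInfRing.mul_def C _ _).symm
    have h3 : opN C (fun _ => (1 : ℝ)) contDiff_const
        (fun i : Fin 0 => Fev g ((Fin.elim0 : Fin 0 → FTerm A S) i))
        = (1 : C.el) := (CInfRing.opN_constEl C 1 _).trans (CInfRing.one_def C).symm
    rw [h2, h3]
    exact Ring.mul_inverse_cancel _ (hg s.1 s.2)

variable (hg : Inverts g S)

/-- Evaluation on the localization. -/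
noncomputable def Fg1 : FEl A S → C.el :=
  Quotient.lift (Fev g) (fun _ _ h => Fev_sound g hg h)

lemma Fg1_fop {m : ℕ} (f : (Fin m → ℝ) → ℝ) (hf : ContDiff ℝ (⊤ : ℕ∞) f) (v : Fin m → FEl A S) :
    Fg1 g hg (fop f hf v) = opN C f hf (fun i => Fg1 g hg (v i)) := by
  have h : v = fun i => ⟦(v i).out⟧ := by funext i; exact (Quotient.out_eq _).symm
  rw [h, fop_mk]
  rfl

/-- The induced morphism out of the localization, as a natural transformation. -/
noncomputable def FdescNat : (FB A S).obj ⟶ C.obj where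
  app n := ↾fun v => (tupleEquiv C n).symm (fun i => Fg1 g hg (v i))
  naturality {m n} F := by
    refine tyHomExt fun v => ?_
    show (tupleEquiv C n).symm (fun i => Fg1 g hg ((Ffun A S).map F v i))
        = C.obj.map F ((tupleEquiv C m).symm (fun i => Fg1 g hg (v i)))
    apply (tupleEquiv C n).injective
    rw [Equiv.apply_symm_apply]
    funext i
    rw [tupleEquiv_map C F _ i ((smooth_coord i).comp F.2), Equiv.apply_symm_apply]
    show Fg1 g hg (fop (fun y => F.1 y i) ((smooth_coord i).comp F.2) v) = _
    exact Fg1_fop g hg _ _ _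

/-- The induced morphism out of the localization. -/
noncomputable def Fdesc : FB A S ⟶ C := ⟨FdescNat g hg⟩

lemma Fdesc_fac : Feta A S ≫ Fdesc g hg = g := by
  apply ObjectProperty.hom_ext
  apply NatTrans.ext
  funext n
  refine tyHomExt fun x => ?_
  show (tupleEquiv C n).symm (fun i => Fg1 g hg (Fvar (tupleEquiv A n x i))) = g.hom.app n x
  apply (tupleEquiv C n).injective
  rw [Equiv.apply_symm_apply]
  funext i
  show app1 g (tupleEquiv A n x i) = tupleEquiv C n (g.hom.app n x) i
  show app1 g (A.obj.map (pr n i) x) = C.obj.map (pr n i) (g.hom.app n x)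
  exact NatTrans.naturality_apply g.hom (pr n i) x

lemma app_eq_of_app1 (h : FB A S ⟶ C) {n : ℕ} (v : Fin n → FEl A S) :
    h.hom.app (SmoothCat.of n) v = (tupleEquiv C n).symm (fun i => app1 h (fun _ : Fin 1 => v i)) := by
  apply (tupleEquiv C n).injective
  rw [Equiv.apply_symm_apply]
  funext i
  rw [tupleEquiv_apply]
  refine (NatTrans.naturality_apply h.hom (pr n i) v).symm.trans ?_
  have hv : (FB A S).obj.map (pr n i) v = fun _ : Fin 1 => v i := by
    funext k
    exact fop_proj i _ v
  exact congrArg (fun y => h.hom.app (SmoothCat.of 1) y) hv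

lemma Fdesc_key (hg : Inverts g S) (g'' : FB A S ⟶ C) (hfac : Feta A S ≫ g'' = g) (t : FTerm A S) :
    app1 g'' (fun _ : Fin 1 => (⟦t⟧ : FEl A S)) = Fev g t := by
  induction t with
  | var x =>
    have happ1 : ∀ a : A.el, app1 g'' (app1 (Feta A S) a) = app1 g a := by
      intro a
      exact congrArg (fun (q : A ⟶ C) => app1 q a) hfac
    cases x with
    | inl a =>
      rw [show (fun _ : Fin 1 => (⟦FTerm.var (.inl a)⟧ : FEl A S)) = app1 (Feta A S) a
        from (app1_Feta a).symm]
      exact happ1 a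
    | inr s =>
      have hmul : app1 g s.1 * app1 g'' (fun _ : Fin 1 => (⟦FTerm.var (.inr s)⟧ : FEl A S))
          = 1 := by
        have h1 := Feta_mul_inv s.1 s.2
        have h2 := congrArg (app1 g'') h1
        rw [app1_mul, app1_one, happ1] at h2
        exact h2
      have hu : IsUnit (app1 g s.1) := hg s.1 s.2
      show app1 g'' (fun _ : Fin 1 => (⟦FTerm.var (.inr s)⟧ : FEl A S))
          = Ring.inverse (app1 g s.1)
      calc app1 g'' (fun _ : Fin 1 => (⟦FTerm.var (.inr s)⟧ : FEl A S))
          = 1 * app1 g'' (fun _ : Fin 1 => (⟦FTerm.var (.inr s)⟧ : FEl A S)) := (one_mul _).symm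
        _ = (Ring.inverse (app1 g s.1) * app1 g s.1)
              * app1 g'' (fun _ : Fin 1 => (⟦FTerm.var (.inr s)⟧ : FEl A S)) := by
            rw [Ring.inverse_mul_cancel _ hu]
        _ = Ring.inverse (app1 g s.1)
              * (app1 g s.1 * app1 g'' (fun _ : Fin 1 => (⟦FTerm.var (.inr s)⟧ : FEl A S))) :=
            mul_assoc _ _ _
        _ = Ring.inverse (app1 g s.1) := by rw [hmul, mul_one]
  | op m f hf v ih =>
    have hv : opN (FB A S) f hf (fun i => (fun _ : Fin 1 => (⟦v i⟧ : FEl A S)))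
        = (fun _ : Fin 1 => (⟦FTerm.op m f hf v⟧ : FEl A S)) := by
      refine (opN_FB f hf _).trans ?_
      funext k
      exact fop_mk f hf v
    refine ((congrArg (app1 g'') hv).symm.trans (hom_opN g'' f hf _)).trans ?_
    show opN C f hf (fun i => app1 g'' (fun _ : Fin 1 => (⟦v i⟧ : FEl A S)))
        = opN C f hf (fun i => Fev g (v i))
    exact congrArg _ (funext fun i => ih i)

lemma Fdesc_uniq (g'' : FB A S ⟶ C) (hfac : Feta A S ≫ g'' = g) : g'' = Fdesc g hg := by
  apply ObjectProperty.hom_ext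
  apply NatTrans.ext
  funext n
  refine tyHomExt fun v => ?_
  refine (app_eq_of_app1 g'' (n := n) v).trans ?_
  show (tupleEquiv C n).symm _ = (tupleEquiv C n).symm (fun i => Fg1 g hg (v i))
  congr 1
  funext i
  refine Quotient.inductionOn (v i) (fun t => ?_)
  exact Fdesc_key g hg g'' hfac t

end UnivProp

end FracConstruction

/-- For every `C^∞`-ring `A` and subset `S ⊆ A(1)`, a `C^∞`-ring of fractions of `A` with
respect to `S` exists. -/
theorem stmt11 (A : CInfRing) (S : Set A.el) :
    ∃ (B : CInfRing) (η : A ⟶ B), Inverts η S ∧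
      ∀ (C : CInfRing) (g : A ⟶ C), Inverts g S → ∃! g' : B ⟶ C, η ≫ g' = g := by
  refine ⟨FB A S, Feta A S, Feta_inverts, ?_⟩
  intro C g hg
  exact ⟨Fdesc g hg, Fdesc_fac g hg, fun g'' h'' => Fdesc_uniq g hg g'' h''⟩
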